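/- Let N ≥ 1, h = 1/N, Δt > 0, β ∈ ℝ, γ > 0, and let n ≥ 1. Suppose m^0, m^1, …, m^n and ṽ^1, …, ṽ^n are grid functions such that |m^0(I)| = 1 for every I and, for each 1 ≤ k ≤ n, (ṽ^k(I) − m^{k−1}(I))/Δt = −β m^{k−1}(I) × (Δ_h ṽ^k)(I) − γ m^{k−1}(I) × (m^{k−1}(I) × (Δ_h ṽ^k)(I)) for every I, and m^k(I) = ṽ^k(I)/|ṽ^k(I)|. Then the unconditional stability bound holds: (1/2)‖∇_h m^n‖_2^2 + γ Δt Σ_{k=1}^{n} h^3 Σ_I | m^{k−1}(I) × (Δ_h ṽ^k)(I) |^2 ≤ (1/2)‖∇_h m^0‖_2^2. -/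

import Mathlib

open scoped BigOperators RealInnerProductSpace

noncomputable section

/-- Euclidean 3-space. -/
abbrev E3 : Type := EuclideanSpace ℝ (Fin 3)

/-- Cross product on `E3`. -/
def cross3 (a b : E3) : E3 :=
  (WithLp.equiv 2 (Fin 3 → ℝ)).symm
    ![a 1 * b 2 - a 2 * b 1, a 2 * b 0 - a 0 * b 2, a 0 * b 1 - a 1 * b 0]

/-- Index set of the triply periodic grid. -/
abbrev Idx (N : ℕ) := Fin 3 → ZMod N

/-- Grid functions. -/
abbrev GridFun (N : ℕ) := Idx N → E3

/-- Forward difference in direction `r`. -/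
def fd {N : ℕ} (h : ℝ) (r : Fin 3) (f : GridFun N) (I : Idx N) : E3 :=
  (1 / h) • (f (I + Pi.single r 1) - f I)

/-- Centered average in direction `r`. -/
def ca {N : ℕ} (r : Fin 3) (f : GridFun N) (I : Idx N) : E3 :=
  ((1 : ℝ) / 2) • (f (I + Pi.single r 1) + f I)

/-- Discrete Laplacian. -/
def dlap {N : ℕ} (h : ℝ) (f : GridFun N) (I : Idx N) : E3 :=
  ∑ r : Fin 3, (1 / h ^ 2) • (f (I + Pi.single r 1) - (2 : ℝ) • f I + f (I - Pi.single r 1))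

/-- Squared discrete `L²` norm. -/
def l2sq {N : ℕ} [NeZero N] (h : ℝ) (f : GridFun N) : ℝ :=
  h ^ 3 * ∑ I : Idx N, ‖f I‖ ^ 2

/-- Squared discrete gradient (`H¹` seminorm). -/
def gradsq {N : ℕ} [NeZero N] (h : ℝ) (f : GridFun N) : ℝ :=
  h ^ 3 * ∑ I : Idx N, ∑ r : Fin 3, ‖fd h r f I‖ ^ 2

/-- Discrete `ℓᵖ` norm, for real `p`. -/
def pnorm {N : ℕ} [NeZero N] (h p : ℝ) (f : GridFun N) : ℝ :=
  (h ^ 3 * ∑ I : Idx N, ‖f I‖ ^ p) ^ (1 / p)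

/-- Discrete `ℓ^∞` norm. -/
def inorm {N : ℕ} [NeZero N] (f : GridFun N) : ℝ :=
  ⨆ I : Idx N, ‖f I‖

/-- Discrete `ℓ^∞` norm of the gradient. -/
def ginorm {N : ℕ} [NeZero N] (h : ℝ) (f : GridFun N) : ℝ :=
  ⨆ I : Idx N, ⨆ r : Fin 3, ‖fd h r f I‖

/-! The update `v^k - m^{k-1}` of the scheme is orthogonal to `m^{k-1}`, so `|v^k| ≥ 1`, and on the
complement of the open unit ball the radial projection `v ↦ v / |v|` is 1-Lipschitz, because
`|a - b|² = (|a| - |b|)² + |a| |b| |â - b̂|²`; hence `‖∇_h m^k‖ ≤ ‖∇_h v^k‖`. Testing the scheme with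
`Δ_h v^k` and summing by parts, `(|x|² - |y|²)/2 ≤ ⟪x - y, x⟫` applied to the difference quotients gives
`½‖∇_h v^k‖² + γ Δt h³ Σ_I |m^{k-1} × Δ_h v^k|² ≤ ½‖∇_h m^{k-1}‖²`. Telescoping over `k` gives the bound. -/

lemma norm_smul_sub_smul_sq_of_norm_eq_one {F : Type*} [NormedAddCommGroup F]
    [InnerProductSpace ℝ F] {u w : F} (hu : ‖u‖ = 1) (hw : ‖w‖ = 1) (s t : ℝ) :
    ‖s • u - t • w‖ ^ 2 = (s - t) ^ 2 + s * t * ‖u - w‖ ^ 2 := by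
  rw [norm_sub_sq_real, norm_sub_sq_real, norm_smul, norm_smul, real_inner_smul_left,
    real_inner_smul_right, Real.norm_eq_abs, Real.norm_eq_abs, mul_pow, mul_pow, sq_abs,
    sq_abs, hu, hw]
  ring

namespace NormedSpace

lemma norm_normalize_sub_normalize_le {F : Type*} [NormedAddCommGroup F]
    [InnerProductSpace ℝ F] {a b : F} (ha : 1 ≤ ‖a‖) (hb : 1 ≤ ‖b‖) :
    ‖normalize a - normalize b‖ ≤ ‖a - b‖ := by
  have hu : ‖normalize a‖ = 1 := norm_normalize (norm_pos_iff.mp (by linarith))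
  have hw : ‖normalize b‖ = 1 := norm_normalize (norm_pos_iff.mp (by linarith))
  have hab : ‖a - b‖ ^ 2 = (‖a‖ - ‖b‖) ^ 2 + ‖a‖ * ‖b‖ * ‖normalize a - normalize b‖ ^ 2 := by
    conv_lhs => rw [← norm_smul_normalize a, ← norm_smul_normalize b]
    exact norm_smul_sub_smul_sq_of_norm_eq_one hu hw _ _
  refine le_of_sq_le_sq ?_ (norm_nonneg _)
  nlinarith [one_le_mul_of_one_le_of_one_le ha hb, sq_nonneg (‖a‖ - ‖b‖),
    sq_nonneg ‖normalize a - normalize b‖]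

end NormedSpace

lemma inner_self_cross3 (a b : E3) : ⟪a, cross3 a b⟫ = 0 := by
  simp [cross3, PiLp.inner_apply, Fin.sum_univ_three]
  ring

lemma inner_cross3_self (a b : E3) : ⟪cross3 a b, b⟫ = 0 := by
  simp [cross3, PiLp.inner_apply, Fin.sum_univ_three]
  ring

lemma inner_cross3_left (a b c : E3) : ⟪cross3 a b, c⟫ = -⟪b, cross3 a c⟫ := by
  simp [cross3, PiLp.inner_apply, Fin.sum_univ_three]
  ring

section SummationByParts

variable {G : Type*} [AddCommGroup G] [Fintype G]
  {F : Type*} [NormedAddCommGroup F] [InnerProductSpace ℝ F]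

lemma sum_inner_second_difference (f g : G → F) (e : G) :
    ∑ x, ⟪f x, g (x + e) - (2 : ℝ) • g x + g (x - e)⟫
      = -∑ x, ⟪f (x + e) - f x, g (x + e) - g x⟫ := by
  have hshift : ∑ x, ⟪f x, g x - g (x - e)⟫ = ∑ x, ⟪f (x + e), g (x + e) - g x⟫ := by
    exact Fintype.sum_equiv (Equiv.subRight e) _ _ fun x => by simp
  have hsplit : ∀ x, ⟪f x, g (x + e) - (2 : ℝ) • g x + g (x - e)⟫
      = ⟪f x, g (x + e) - g x⟫ - ⟪f x, g x - g (x - e)⟫ := fun x => by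
    rw [← inner_sub_right]
    congr 1
    module
  rw [Finset.sum_congr rfl fun x _ => hsplit x, Finset.sum_sub_distrib, hshift,
    ← Finset.sum_sub_distrib, ← Finset.sum_neg_distrib]
  simp only [inner_sub_left, neg_sub]

end SummationByParts

variable {N : ℕ}

lemma fd_sub (h : ℝ) (r : Fin 3) (f g : GridFun N) (I : Idx N) :
    fd h r (f - g) I = fd h r f I - fd h r g I := by
  simp only [fd, Pi.sub_apply]
  module

variable [NeZero N]

lemma sum_inner_dlap (h : ℝ) (f g : GridFun N) :
    ∑ I, ⟪f I, dlap h g I⟫ = -∑ I, ∑ r, ⟪fd h r f I, fd h r g I⟫ := by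
  have hfd : ∀ r I, ⟪fd h r f I, fd h r g I⟫
      = 1 / h ^ 2 * ⟪f (I + Pi.single r 1) - f I, g (I + Pi.single r 1) - g I⟫ := fun r I => by
    rw [fd, fd, real_inner_smul_left, real_inner_smul_right, ← mul_assoc]
    ring
  simp only [dlap, inner_sum, real_inner_smul_right, hfd, ← Finset.mul_sum]
  rw [← mul_neg, Finset.sum_comm]
  simp only [sum_inner_second_difference, Finset.sum_neg_distrib]
  rw [Finset.sum_comm]

lemma half_sq_norm_sub_half_sq_norm_le_inner {F : Type*} [NormedAddCommGroup F]
    [InnerProductSpace ℝ F] (x y : F) : ‖x‖ ^ 2 / 2 - ‖y‖ ^ 2 / 2 ≤ ⟪x - y, x⟫ := by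
  have hxy : ⟪x - y, x⟫ = ‖x‖ ^ 2 - ⟪x, y⟫ := by
    rw [inner_sub_left, real_inner_self_eq_norm_sq, real_inner_comm]
  nlinarith [norm_sub_sq_real x y, sq_nonneg ‖x - y‖]

lemma half_gradsq_sub_half_gradsq_le {h : ℝ} (hh : 0 ≤ h) (f g : GridFun N) :
    1 / 2 * gradsq h f - 1 / 2 * gradsq h g ≤ h ^ 3 * ∑ I, ⟪g I - f I, dlap h f I⟫ := by
  have hsbp : ∑ I, ⟪g I - f I, dlap h f I⟫ = ∑ I, ∑ r, ⟪fd h r f I - fd h r g I, fd h r f I⟫ := by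
    calc ∑ I, ⟪g I - f I, dlap h f I⟫ = -∑ I, ⟪(f - g) I, dlap h f I⟫ := by
          simp only [← Finset.sum_neg_distrib, ← inner_neg_left, Pi.sub_apply, neg_sub]
      _ = _ := by simp only [sum_inner_dlap, neg_neg, fd_sub]
  rw [hsbp, gradsq, gradsq, ← mul_assoc, ← mul_assoc, mul_comm (1 / 2 : ℝ), mul_assoc, mul_assoc,
    ← mul_sub]
  refine mul_le_mul_of_nonneg_left ?_ (pow_nonneg hh 3)
  simp only [Finset.mul_sum, ← Finset.sum_sub_distrib]
  gcongr with I _ r _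
  linarith [half_sq_norm_sub_half_sq_norm_le_inner (fd h r f I) (fd h r g I)]

lemma gradsq_normalize_le {h : ℝ} (hh : 0 ≤ h) {v : GridFun N} (hv : ∀ I, 1 ≤ ‖v I‖) :
    gradsq h (fun I => NormedSpace.normalize (v I)) ≤ gradsq h v := by
  unfold gradsq
  gcongr with I _ r _
  simp only [fd, norm_smul]
  gcongr
  exact NormedSpace.norm_normalize_sub_normalize_le (hv _) (hv _)

section SchemeStep

variable {Δt β γ : ℝ} {a L v : E3}

lemma inner_sub_eq_zero_of_scheme (hΔt : Δt ≠ 0)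
    (hv : (1 / Δt) • (v - a) = -(β • cross3 a L) - γ • cross3 a (cross3 a L)) :
    ⟪a, v - a⟫ = 0 := by
  have h0 : ⟪a, (1 / Δt) • (v - a)⟫ = 0 := by
    rw [hv, inner_sub_right, inner_neg_right, real_inner_smul_right, real_inner_smul_right,
      inner_self_cross3, inner_self_cross3]
    ring
  rwa [real_inner_smul_right, mul_eq_zero, or_iff_right (one_div_ne_zero hΔt)] at h0

lemma norm_le_norm_of_scheme (hΔt : Δt ≠ 0)
    (hv : (1 / Δt) • (v - a) = -(β • cross3 a L) - γ • cross3 a (cross3 a L)) :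
    ‖a‖ ≤ ‖v‖ := by
  have hpyth := norm_add_sq_eq_norm_sq_add_norm_sq_real (inner_sub_eq_zero_of_scheme hΔt hv)
  rw [add_sub_cancel] at hpyth
  refine (mul_self_le_mul_self_iff (norm_nonneg a) (norm_nonneg v)).mpr ?_
  rw [hpyth]
  exact le_add_of_nonneg_right (mul_self_nonneg _)

lemma inner_sub_lap_of_scheme (hΔt : Δt ≠ 0)
    (hv : (1 / Δt) • (v - a) = -(β • cross3 a L) - γ • cross3 a (cross3 a L)) :
    ⟪a - v, L⟫ = -(γ * Δt * ‖cross3 a L‖ ^ 2) := by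
  have hva : v - a = Δt • (-(β • cross3 a L) - γ • cross3 a (cross3 a L)) := by
    rw [← hv, smul_smul, mul_one_div_cancel hΔt, one_smul]
  rw [← neg_sub, inner_neg_left, hva, real_inner_smul_left, inner_sub_left, inner_neg_left,
    real_inner_smul_left, real_inner_smul_left, inner_cross3_self, inner_cross3_left,
    real_inner_self_eq_norm_sq]
  ring

end SchemeStep

lemma energy_step {h Δt β γ : ℝ} (hh : 0 ≤ h) (hΔt : Δt ≠ 0) {m v : GridFun N}
    (hm : ∀ I, ‖m I‖ = 1)
    (hv : ∀ I, (1 / Δt) • (v I - m I)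
      = -(β • cross3 (m I) (dlap h v I)) - γ • cross3 (m I) (cross3 (m I) (dlap h v I))) :
    1 / 2 * gradsq h (fun I => NormedSpace.normalize (v I))
        + γ * Δt * (h ^ 3 * ∑ I, ‖cross3 (m I) (dlap h v I)‖ ^ 2)
      ≤ 1 / 2 * gradsq h m := by
  have hnormalize : gradsq h (fun I => NormedSpace.normalize (v I)) ≤ gradsq h v :=
    gradsq_normalize_le hh fun I => hm I ▸ norm_le_norm_of_scheme hΔt (hv I)
  have henergy := half_gradsq_sub_half_gradsq_le hh v m
  simp only [fun I => inner_sub_lap_of_scheme hΔt (hv I), Finset.sum_neg_distrib,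
    ← Finset.mul_sum] at henergy
  linarith

lemma add_sum_Icc_le_of_succ_le {M : Type*} [AddCommMonoid M] [PartialOrder M]
    [IsOrderedAddMonoid M] {E d : ℕ → M} {n : ℕ} (hstep : ∀ k < n, E (k + 1) + d (k + 1) ≤ E k) :
    E n + ∑ k ∈ Finset.Icc 1 n, d k ≤ E 0 := by
  induction n with
  | zero => simp
  | succ n ih =>
    rw [Finset.sum_Icc_succ_top (Nat.le_add_left 1 n), ← add_assoc, add_right_comm]
    calc E (n + 1) + d (n + 1) + ∑ k ∈ Finset.Icc 1 n, d k
        ≤ E n + ∑ k ∈ Finset.Icc 1 n, d k := add_le_add_left (hstep n n.lt_succ_self) _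
      _ ≤ E 0 := ih fun k hk => hstep k (Nat.lt_succ_of_lt hk)

theorem statement11_general (N : ℕ) [NeZero N] (h Δt β γ : ℝ) (hh : h = 1 / (N : ℝ))
    (hΔt : 0 < Δt) (n : ℕ) (m v : ℕ → GridFun N)
    (hm0 : ∀ I, ‖m 0 I‖ = 1)
    (hscheme : ∀ k, 1 ≤ k → k ≤ n → ∀ I : Idx N,
      (1 / Δt) • (v k I - m (k - 1) I)
        = -(β • cross3 (m (k - 1) I) (dlap h (v k) I))
            - γ • cross3 (m (k - 1) I) (cross3 (m (k - 1) I) (dlap h (v k) I)))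
    (hproj : ∀ k, 1 ≤ k → k ≤ n → ∀ I : Idx N, m k I = ‖v k I‖⁻¹ • v k I) :
    (1 / 2) * gradsq h (m n)
        + γ * Δt * ∑ k ∈ Finset.Icc 1 n,
            (h ^ 3 * ∑ I : Idx N, ‖cross3 (m (k - 1) I) (dlap h (v k) I)‖ ^ 2)
      ≤ (1 / 2) * gradsq h (m 0) := by
  have hh₀ : 0 ≤ h := hh ▸ by positivity
  have hscheme' : ∀ k < n, ∀ I, (1 / Δt) • (v (k + 1) I - m k I)
      = -(β • cross3 (m k I) (dlap h (v (k + 1)) I))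
        - γ • cross3 (m k I) (cross3 (m k I) (dlap h (v (k + 1)) I)) := fun k hk =>
    hscheme (k + 1) k.succ_pos hk
  have hproj' : ∀ k < n, m (k + 1) = fun I => NormedSpace.normalize (v (k + 1) I) := fun k hk =>
    funext (hproj (k + 1) k.succ_pos hk)
  have hunit : ∀ k ≤ n, ∀ I, ‖m k I‖ = 1 := by
    intro k
    induction k with
    | zero => exact fun _ => hm0
    | succ k ih =>
      intro hk I
      have hv : 1 ≤ ‖v (k + 1) I‖ :=
        ih (Nat.le_of_succ_le hk) I ▸ norm_le_norm_of_scheme hΔt.ne' (hscheme' k hk I)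
      rw [hproj' k hk]
      exact NormedSpace.norm_normalize (norm_pos_iff.mp (one_pos.trans_le hv))
  rw [Finset.mul_sum]
  refine add_sum_Icc_le_of_succ_le (E := fun k => 1 / 2 * gradsq h (m k)) fun k hk => ?_
  rw [hproj' k hk, Nat.add_sub_cancel]
  exact energy_step hh₀ hΔt.ne' (hunit k hk.le) (hscheme' k hk)

/-- unconditional discrete `H¹` stability of the fully discrete scheme. -/
theorem statement11 (N : ℕ) [NeZero N] (hN : 1 ≤ N) (h Δt β γ : ℝ) (hh : h = 1 / (N : ℝ))
    (hΔt : 0 < Δt) (hγ : 0 < γ) (n : ℕ) (hn : 1 ≤ n) (m v : ℕ → GridFun N)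
    (hm0 : ∀ I, ‖m 0 I‖ = 1)
    (hscheme : ∀ k, 1 ≤ k → k ≤ n → ∀ I : Idx N,
      (1 / Δt) • (v k I - m (k - 1) I)
        = -(β • cross3 (m (k - 1) I) (dlap h (v k) I))
            - γ • cross3 (m (k - 1) I) (cross3 (m (k - 1) I) (dlap h (v k) I)))
    (hproj : ∀ k, 1 ≤ k → k ≤ n → ∀ I : Idx N, m k I = ‖v k I‖⁻¹ • v k I) :
    (1 / 2) * gradsq h (m n)
        + γ * Δt * ∑ k ∈ Finset.Icc 1 n,
            (h ^ 3 * ∑ I : Idx N, ‖cross3 (m (k - 1) I) (dlap h (v k) I)‖ ^ 2)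
      ≤ (1 / 2) * gradsq h (m 0) :=
  statement11_general N h Δt β γ hh hΔt n m v hm0 hscheme hproj
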